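/- arXiv:1501.04214 — 2 statements merged into one kernel-verified Lean document; each statement's English description precedes it below -/
import Mathlib

section
/- Let W be a Weyl group, I a subset of simple roots, W_P the corresponding parabolic subgroup. If y = σ_1⋯σ_l is a reduced expression of a minimal-length coset representative y of yW_P, then for i < j the cosets (σ_1⋯σ̂_i⋯σ_l)W_P and (σ_1⋯σ̂_j⋯σ_l)W_P are distinct (where σ̂_k denotes omission of the k-th factor). -/
/-!
Let `y` be the product of the reduced word `ω` and `wₖ` the product of `ω` with its `k`-th
letter deleted. Then `y * wₖ⁻¹` is the `k`-th left inversion `σ₁⋯σₖ₋₁ σₖ σₖ₋₁⋯σ₁` of `ω`, and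
for `i < j` it is also the `i`-th left inversion of the word of `wⱼ`. Hence `y * wᵢ⁻¹ * wⱼ` is
the product of `ω` with both letters deleted, of length at most `ℓ(y) - 2`. If
`wᵢ W_P = wⱼ W_P`, this element would lie in `y W_P` and be shorter than the minimal
representative `y`.
-/

namespace CoxeterSystem

open List

variable {B W : Type*} [Group W] {M : CoxeterMatrix B} (cs : CoxeterSystem M W)

theorem getD_leftInvSeq_eraseIdx_of_lt (ω : List B) {i j : ℕ} (hij : i < j) :
    (cs.leftInvSeq (ω.eraseIdx j)).getD i 1 = (cs.leftInvSeq ω).getD i 1 := by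
  simp only [getD_leftInvSeq, take_eraseIdx_eq_take_of_le _ _ _ hij.le,
    getElem?_eraseIdx_of_lt hij]

theorem wordProd_mul_inv_wordProd_eraseIdx (ω : List B) (i : ℕ) :
    cs.wordProd ω * (cs.wordProd (ω.eraseIdx i))⁻¹ = (cs.leftInvSeq ω).getD i 1 := by
  rw [← getD_leftInvSeq_mul_wordProd, mul_inv_rev, mul_inv_cancel_left,
    inv_eq_of_mul_eq_one_right (cs.getD_leftInvSeq_mul_self ω i)]

theorem wordProd_mul_inv_wordProd_eraseIdx_mul_wordProd_eraseIdx (ω : List B) {i j : ℕ}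
    (hij : i < j) :
    cs.wordProd ω * (cs.wordProd (ω.eraseIdx i))⁻¹ * cs.wordProd (ω.eraseIdx j) =
      cs.wordProd ((ω.eraseIdx j).eraseIdx i) := by
  rw [wordProd_mul_inv_wordProd_eraseIdx, ← cs.getD_leftInvSeq_eraseIdx_of_lt ω hij,
    getD_leftInvSeq_mul_wordProd]

theorem length_wordProd_mul_inv_wordProd_eraseIdx_mul_wordProd_eraseIdx_add_two_le
    (ω : List B) {i j : ℕ} (hij : i < j) (hj : j < ω.length) :
    cs.length
        (cs.wordProd ω * (cs.wordProd (ω.eraseIdx i))⁻¹ * cs.wordProd (ω.eraseIdx j)) + 2 ≤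
      ω.length := by
  rw [wordProd_mul_inv_wordProd_eraseIdx_mul_wordProd_eraseIdx _ _ hij]
  have hle := cs.length_wordProd_le ((ω.eraseIdx j).eraseIdx i)
  rw [length_eraseIdx_of_lt (by rw [length_eraseIdx_of_lt hj]; omega),
    length_eraseIdx_of_lt hj] at hle
  omega

end CoxeterSystem

theorem stable_basis.distinct_cosets_of_deleted_letters_general
    {B W : Type} [Group W] {M : CoxeterMatrix B}
    (cs : CoxeterSystem M W)
    (WP : Subgroup W)
    (ω : List B) (hred : cs.IsReduced ω)
    (y : W) (hy : y = cs.wordProd ω)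
    (hmin : ∀ v : W, y⁻¹ * v ∈ WP → cs.length y ≤ cs.length v)
    (i j : Fin ω.length) (hij : i < j) :
    (cs.wordProd (ω.eraseIdx i.1))⁻¹ * cs.wordProd (ω.eraseIdx j.1) ∉ WP := by
  intro hmem
  have hle := hmin (y * (cs.wordProd (ω.eraseIdx i.1))⁻¹ * cs.wordProd (ω.eraseIdx j.1))
    (by rwa [mul_assoc, inv_mul_cancel_left])
  have hshort :=
    cs.length_wordProd_mul_inv_wordProd_eraseIdx_mul_wordProd_eraseIdx_add_two_le ω hij j.isLt
  rw [hy, hred.eq] at hle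
  omega

/-- if `y = σ₁⋯σ_l` is a reduced word for the minimal-length
representative of the coset `yW_P`, then deleting two different letters gives
distinct cosets of `W_P`. -/
theorem stable_basis.distinct_cosets_of_deleted_letters
    {B W : Type} [Group W] {M : CoxeterMatrix B}
    (cs : CoxeterSystem M W)
    (I : Set B) (WP : Subgroup W) (hWP : WP = Subgroup.closure (cs.simple '' I))
    (ω : List B) (hred : cs.IsReduced ω)
    (y : W) (hy : y = cs.wordProd ω)
    (hmin : ∀ v : W, y⁻¹ * v ∈ WP → cs.length y ≤ cs.length v)
    (i j : Fin ω.length) (hij : i < j) :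
    (cs.wordProd (ω.eraseIdx i.1))⁻¹ * cs.wordProd (ω.eraseIdx j.1) ∉ WP :=
  stable_basis.distinct_cosets_of_deleted_letters_general cs WP ω hred y hy hmin i j hij
end

section
/- With ξ as above, for a simple root α with l(yσ_α) = l(y)+1 and a reduced word y = σ_1⋯σ_l: ξ_{α_1,…,α_l,α}(w) = (ℏ/(wα)) ξ_{α_1,…,α_l}(w) + ((wα−ℏ)/(wα)) ξ_{α_1,…,α_l}(wσ_α) for all w ∈ W. -/
/-!
Split the subwords of `ω ++ [i]` according to whether they use the last letter. If not, the
subword is a subword `t` of `ω` with the same product `w`, and the last position is one more gap,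
contributing the factor `ℏ / wα`. If so, the remaining letters form a subword `t` of `ω` with
product `wσ_α`, and the last letter contributes `(γ - ℏ) / γ` with `γ = (wσ_α)σ_α α = wα`.
Every other factor only involves letters of `ω` and is the corresponding factor for `t`.
-/

open scoped Classical
noncomputable section

namespace StableBasis14

variable {B W Q : Type} [Group W] [Field Q] {M : CoxeterMatrix B}

/-- The ordered product of the letters of `ω` at the positions in `s`. -/
def subwordProd (cs : CoxeterSystem M W) (ω : List B)
    (s : Finset (Fin ω.length)) : W :=
  cs.wordProd ((s.sort (· ≤ ·)).map fun k => ω.get k)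

/-- For `k ∈ s`, `σ_{i_1}⋯σ_{i_j} α_{i_j}` where `i_j = k`: apply the product of
the selected letters in positions `≤ k` to the simple root at position `k`. -/
def gam (cs : CoxeterSystem M W) (act : W →* Q ≃+* Q) (sroot : B → Q)
    (ω : List B) (s : Finset (Fin ω.length)) (k : Fin ω.length) : Q :=
  act (subwordProd cs ω (s.filter (· ≤ k))) (sroot (ω.get k))

/-- For `r ∉ s` (a "gap" position), `σ_{i_1}⋯σ_{i_j} α_r` where `i_j < r < i_{j+1}`:
apply the product of the selected letters in positions `< r` to the simple root
at position `r`. -/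
def gap (cs : CoxeterSystem M W) (act : W →* Q ≃+* Q) (sroot : B → Q)
    (ω : List B) (s : Finset (Fin ω.length)) (r : Fin ω.length) : Q :=
  act (subwordProd cs ω (s.filter (· < r))) (sroot (ω.get r))

/-- The function `ξ_{α_1,…,α_l}(w)`. -/
def xi (cs : CoxeterSystem M W) (act : W →* Q ≃+* Q) (sroot : B → Q) (hbar : Q)
    (ω : List B) (w : W) : Q :=
  ∑ s ∈ Finset.univ.filter
      (fun s : Finset (Fin ω.length) => subwordProd cs ω s = w),
    (∏ k ∈ s, (gam cs act sroot ω s k - hbar) / gam cs act sroot ω s k)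
      * (hbar ^ (ω.length - s.card) / ∏ r ∈ sᶜ, gap cs act sroot ω s r)

theorem _root_.Finset.sort_insert_of_forall_lt {α : Type*} [LinearOrder α] {s : Finset α}
    {a : α} (h : ∀ b ∈ s, b < a) : (insert a s).sort = s.sort ++ [a] := by
  have ha : a ∉ s := fun ha => lt_irrefl a (h a ha)
  have hl : (s.sort ++ [a]).toFinset = insert a s := by
    ext b
    simp
  have hnodup : (s.sort ++ [a]).Nodup :=
    List.nodup_append.2 ⟨s.sort_nodup _, List.nodup_singleton a, by simpa using ha⟩
  rw [← hl, List.toFinset_sort _ hnodup]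
  refine List.pairwise_append.2 ⟨s.pairwise_sort _, by simp, ?_⟩
  simp only [Finset.mem_sort, List.mem_singleton]
  rintro b hb _ rfl
  exact (h b hb).le

theorem _root_.Finset.powerset_map {α β : Type*} (e : α ↪ β) (s : Finset α) :
    (s.map e).powerset = s.powerset.map (Finset.mapEmbedding e).toEmbedding := by
  ext u
  simp [Finset.subset_map_iff, eq_comm]

theorem _root_.StrictMono.filter_le_map {α β : Type*} [LinearOrder α] [LinearOrder β]
    {e : α ↪ β} (he : StrictMono e) (t : Finset α) (k : α) :
    (t.map e).filter (· ≤ e k) = (t.filter (· ≤ k)).map e := by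
  rw [Finset.filter_map]
  exact congrArg _ (Finset.filter_congr fun _ _ => he.le_iff_le)

theorem _root_.StrictMono.filter_lt_map {α β : Type*} [LinearOrder α] [LinearOrder β]
    {e : α ↪ β} (he : StrictMono e) (t : Finset α) (k : α) :
    (t.map e).filter (· < e k) = (t.filter (· < k)).map e := by
  rw [Finset.filter_map]
  exact congrArg _ (Finset.filter_congr fun _ _ => he.lt_iff_lt)

section SplitAlongEmbedding

variable {α β : Type*} (e : α ↪ β) {a : β}

theorem _root_.Finset.notMem_map_of_range_eq (hrange : Set.range e = {a}ᶜ) (t : Finset α) :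
    a ∉ t.map e := by
  rw [Finset.mem_map]
  rintro ⟨x, -, hx⟩
  exact (hrange ▸ Set.mem_range_self x : e x ∈ ({a}ᶜ : Set β)) hx

variable [Fintype α] [Fintype β] [DecidableEq α] [DecidableEq β]

theorem _root_.Finset.compl_map_of_range_eq (hrange : Set.range e = {a}ᶜ) (t : Finset α) :
    (t.map e)ᶜ = insert a (tᶜ.map e) := by
  ext b
  by_cases hb : b = a
  · subst hb
    simp [Finset.notMem_map_of_range_eq e hrange]
  · obtain ⟨x, rfl⟩ : b ∈ Set.range e := hrange ▸ hb
    simp [hb]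

theorem _root_.Finset.compl_insert_map_of_range_eq (hrange : Set.range e = {a}ᶜ)
    (t : Finset α) : (insert a (t.map e))ᶜ = tᶜ.map e := by
  rw [Finset.compl_insert, Finset.compl_map_of_range_eq e hrange,
    Finset.erase_insert (Finset.notMem_map_of_range_eq e hrange _)]

theorem _root_.Finset.sum_finset_eq_sum_map_add_sum_insert_map {R : Type*} [AddCommMonoid R]
    (hrange : Set.range e = {a}ᶜ) (f : Finset β → R) :
    ∑ s, f s = ∑ t : Finset α, f (t.map e) + ∑ t : Finset α, f (insert a (t.map e)) := by
  have huniv : insert a ((Finset.univ : Finset α).map e) = Finset.univ := by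
    simpa using (Finset.compl_map_of_range_eq e hrange ∅).symm
  rw [← Finset.powerset_univ, ← huniv,
    Finset.sum_powerset_insert (Finset.notMem_map_of_range_eq e hrange _), Finset.powerset_map,
    Finset.powerset_univ, Finset.sum_map, Finset.sum_map]
  rfl

end SplitAlongEmbedding

section Positions

variable (ω : List B) (i : B)

def castAppend : Fin ω.length ↪ Fin (ω ++ [i]).length := Fin.castLEEmb (by simp)

def lastPos : Fin (ω ++ [i]).length := ⟨ω.length, by simp⟩

theorem range_castAppend : Set.range (castAppend ω i) = {lastPos ω i}ᶜ := by
  ext j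
  have hj : (j : ℕ) < ω.length + 1 := by simpa using j.isLt
  rw [castAppend, Fin.coe_castLEEmb, Fin.range_castLE, Set.mem_ofPred_eq,
    Set.mem_compl_singleton_iff, ne_eq, Fin.ext_iff]
  simp only [lastPos]
  omega

theorem strictMono_castAppend : StrictMono (castAppend ω i) := Fin.strictMono_castLE (by simp)

theorem castAppend_lt_lastPos (k : Fin ω.length) : castAppend ω i k < lastPos ω i := k.isLt

theorem le_lastPos (j : Fin (ω ++ [i]).length) : j ≤ lastPos ω i := by
  have hj : (j : ℕ) ≤ ω.length := by simpa [Nat.lt_succ_iff] using j.isLt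
  exact Fin.le_def.2 hj

theorem get_castAppend (k : Fin ω.length) : (ω ++ [i]).get (castAppend ω i k) = ω.get k := by
  simp [castAppend, List.getElem_append_left k.isLt]

theorem get_lastPos : (ω ++ [i]).get (lastPos ω i) = i := by
  simp [lastPos]

theorem lt_lastPos_of_mem_map (t : Finset (Fin ω.length)) :
    ∀ j ∈ t.map (castAppend ω i), j < lastPos ω i := by
  simp only [Finset.mem_map]
  rintro _ ⟨k, -, rfl⟩
  exact castAppend_lt_lastPos ω i k

end Positions

def xiSummand (cs : CoxeterSystem M W) (act : W →* Q ≃+* Q) (sroot : B → Q) (hbar : Q)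
    (ω : List B) (s : Finset (Fin ω.length)) : Q :=
  (∏ k ∈ s, (gam cs act sroot ω s k - hbar) / gam cs act sroot ω s k)
    * (hbar ^ (ω.length - s.card) / ∏ r ∈ sᶜ, gap cs act sroot ω s r)

section Splitting

variable (cs : CoxeterSystem M W) (ω : List B) (i : B)

theorem subwordProd_map_castAppend (t : Finset (Fin ω.length)) :
    subwordProd cs (ω ++ [i]) (t.map (castAppend ω i)) = subwordProd cs ω t := by
  rw [subwordProd, ← ((strictMono_castAppend ω i).strictMonoOn t).map_finsetSort, List.map_map,
    subwordProd]
  congr 1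
  exact List.map_congr_left fun k _ => get_castAppend ω i k

theorem subwordProd_insert_lastPos_map_castAppend (t : Finset (Fin ω.length)) :
    subwordProd cs (ω ++ [i]) (insert (lastPos ω i) (t.map (castAppend ω i)))
      = subwordProd cs ω t * cs.simple i := by
  rw [← subwordProd_map_castAppend cs ω i, subwordProd, subwordProd,
    Finset.sort_insert_of_forall_lt (lt_lastPos_of_mem_map ω i t), List.map_append,
    cs.wordProd_append, List.map_singleton, get_lastPos, cs.wordProd_singleton]

variable (act : W →* Q ≃+* Q) (sroot : B → Q) (t : Finset (Fin ω.length))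

theorem gam_map_castAppend (k : Fin ω.length) :
    gam cs act sroot (ω ++ [i]) (t.map (castAppend ω i)) (castAppend ω i k)
      = gam cs act sroot ω t k := by
  rw [gam, (strictMono_castAppend ω i).filter_le_map, subwordProd_map_castAppend,
    get_castAppend, gam]

theorem gam_insert_lastPos_castAppend (k : Fin ω.length) :
    gam cs act sroot (ω ++ [i]) (insert (lastPos ω i) (t.map (castAppend ω i)))
      (castAppend ω i k) = gam cs act sroot ω t k := by
  rw [gam, Finset.filter_insert, if_neg (castAppend_lt_lastPos ω i k).not_ge,
    (strictMono_castAppend ω i).filter_le_map, subwordProd_map_castAppend, get_castAppend, gam]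

theorem gam_insert_lastPos_lastPos :
    gam cs act sroot (ω ++ [i]) (insert (lastPos ω i) (t.map (castAppend ω i))) (lastPos ω i)
      = act (subwordProd cs ω t * cs.simple i) (sroot i) := by
  rw [gam, Finset.filter_true_of_mem fun j _ => le_lastPos ω i j,
    subwordProd_insert_lastPos_map_castAppend, get_lastPos]

theorem gap_map_castAppend (r : Fin ω.length) :
    gap cs act sroot (ω ++ [i]) (t.map (castAppend ω i)) (castAppend ω i r)
      = gap cs act sroot ω t r := by
  rw [gap, (strictMono_castAppend ω i).filter_lt_map, subwordProd_map_castAppend,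
    get_castAppend, gap]

theorem gap_map_castAppend_lastPos :
    gap cs act sroot (ω ++ [i]) (t.map (castAppend ω i)) (lastPos ω i)
      = act (subwordProd cs ω t) (sroot i) := by
  rw [gap, Finset.filter_true_of_mem (lt_lastPos_of_mem_map ω i t), subwordProd_map_castAppend,
    get_lastPos]

theorem gap_insert_lastPos_castAppend (r : Fin ω.length) :
    gap cs act sroot (ω ++ [i]) (insert (lastPos ω i) (t.map (castAppend ω i)))
      (castAppend ω i r) = gap cs act sroot ω t r := by
  rw [gap, Finset.filter_insert, if_neg (castAppend_lt_lastPos ω i r).asymm,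
    (strictMono_castAppend ω i).filter_lt_map, subwordProd_map_castAppend, get_castAppend, gap]

variable (hbar : Q)

theorem xi_eq_sum_ite (w : W) :
    xi cs act sroot hbar ω w
      = ∑ s, if subwordProd cs ω s = w then xiSummand cs act sroot hbar ω s else 0 :=
  Finset.sum_filter _ _

theorem xiSummand_map_castAppend :
    xiSummand cs act sroot hbar (ω ++ [i]) (t.map (castAppend ω i))
      = hbar / act (subwordProd cs ω t) (sroot i) * xiSummand cs act sroot hbar ω t := by
  have hcard : (ω ++ [i]).length - (t.map (castAppend ω i)).card = ω.length - t.card + 1 := by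
    have := Finset.card_le_univ t
    simp only [Finset.card_map, List.length_append, List.length_singleton, Fintype.card_fin]
      at this ⊢
    omega
  rw [xiSummand, xiSummand, Finset.prod_map,
    Finset.compl_map_of_range_eq _ (range_castAppend ω i),
    Finset.prod_insert (Finset.notMem_map_of_range_eq _ (range_castAppend ω i) _),
    Finset.prod_map, hcard, pow_succ', gap_map_castAppend_lastPos]
  simp only [gam_map_castAppend, gap_map_castAppend]
  rw [mul_left_comm, div_mul_div_comm]

theorem xiSummand_insert_lastPos_map_castAppend :
    xiSummand cs act sroot hbar (ω ++ [i]) (insert (lastPos ω i) (t.map (castAppend ω i)))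
      = (act (subwordProd cs ω t * cs.simple i) (sroot i) - hbar)
          / act (subwordProd cs ω t * cs.simple i) (sroot i)
        * xiSummand cs act sroot hbar ω t := by
  have hlast := Finset.notMem_map_of_range_eq _ (range_castAppend ω i) t
  have hcard : (ω ++ [i]).length - (insert (lastPos ω i) (t.map (castAppend ω i))).card
      = ω.length - t.card := by
    simp [Finset.card_insert_of_notMem hlast]
  rw [xiSummand, xiSummand, Finset.prod_insert hlast, Finset.prod_map,
    Finset.compl_insert_map_of_range_eq _ (range_castAppend ω i), Finset.prod_map, hcard,
    gam_insert_lastPos_lastPos]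
  simp only [gam_insert_lastPos_castAppend, gap_insert_lastPos_castAppend]
  rw [mul_assoc]

end Splitting

theorem xi_recursion_general
    (cs : CoxeterSystem M W)
    (act : W →* Q ≃+* Q) (sroot : B → Q) (hbar : Q)
    (ω : List B) (i : B)
    (w : W) :
    xi cs act sroot hbar (ω ++ [i]) w
      = (hbar / act w (sroot i)) * xi cs act sroot hbar ω w
        + ((act w (sroot i) - hbar) / act w (sroot i))
          * xi cs act sroot hbar ω (w * cs.simple i) := by
  rw [xi_eq_sum_ite, xi_eq_sum_ite, xi_eq_sum_ite,
    Finset.sum_finset_eq_sum_map_add_sum_insert_map _ (range_castAppend ω i),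
    Finset.mul_sum, Finset.mul_sum]
  congr 1 <;> refine Finset.sum_congr rfl fun t _ => ?_
  · rw [subwordProd_map_castAppend, xiSummand_map_castAppend]
    split_ifs with h <;> simp [h]
  · rw [subwordProd_insert_lastPos_map_castAppend, xiSummand_insert_lastPos_map_castAppend]
    have hcond :
        subwordProd cs ω t = w * cs.simple i ↔ subwordProd cs ω t * cs.simple i = w := by
      rw [← mul_inv_eq_iff_eq_mul, cs.inv_simple]
    simp_rw [hcond]
    split_ifs with h <;> simp [h]

/-- the recursion
`ξ_{α_1,…,α_l,α}(w) = (ℏ/(wα)) ξ_{α_1,…,α_l}(w) + ((wα−ℏ)/(wα)) ξ_{α_1,…,α_l}(wσ_α)`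
whenever `l(yσ_α) = l(y) + 1`. -/
theorem xi_recursion
    (cs : CoxeterSystem M W)
    (act : W →* Q ≃+* Q) (pos : Finset Q) (sroot : B → Q) (hbar : Q)
    (hfix : ∀ w : W, act w hbar = hbar) (hbar_ne : hbar ≠ 0)
    (hpos : ∀ α ∈ pos, -α ∉ pos)
    (hperm : ∀ (w : W), ∀ α ∈ pos, act w α ∈ pos ∨ -(act w α) ∈ pos)
    (hsimple : ∀ i, sroot i ∈ pos)
    (hsimple_neg : ∀ i, act (cs.simple i) (sroot i) = -sroot i)
    (hsimple_perm : ∀ i, ∀ α ∈ pos, α ≠ sroot i → act (cs.simple i) α ∈ pos)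
    (ω : List B) (i : B)
    (hred : cs.IsReduced ω) (hred' : cs.IsReduced (ω ++ [i]))
    (w : W) (hw : act w (sroot i) ≠ 0) :
    xi cs act sroot hbar (ω ++ [i]) w
      = (hbar / act w (sroot i)) * xi cs act sroot hbar ω w
        + ((act w (sroot i) - hbar) / act w (sroot i))
          * xi cs act sroot hbar ω (w * cs.simple i) :=
  xi_recursion_general cs act sroot hbar ω i w

end StableBasis14
end
end
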